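/- Let n ≥ 4 and let A_n² be the square of the n×n upper-shift matrix, i.e. the matrix with (A_n²)_{i,i+2} = 1 for 1 ≤ i ≤ n−2 and all other entries 0. Then the complex vector space sol_{A_n²} = {X ∈ M_n(ℂ) | Xᵀ A_n² + A_n² X = 0} has dimension: n if n ≡ 0 (mod 4); n if n ≡ 1 (mod 4); n+2 if n ≡ 2 (mod 4); and n+1 if n ≡ 3 (mod 4). -/
import Mathlib


open Matrix

/-- The `n × n` nilpotent upper-shift matrix `A_n`. -/
def shiftMat (n : ℕ) : Matrix (Fin n) (Fin n) ℂ :=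
  Matrix.of fun i j => if (j : ℕ) = (i : ℕ) + 1 then 1 else 0

/-- The solution space `{X | Xᵀ A + A X = 0}` as a ℂ-linear subspace of `M_n(ℂ)`. -/
noncomputable def solSpace (n : ℕ) (A : Matrix (Fin n) (Fin n) ℂ) :
    Submodule ℂ (Matrix (Fin n) (Fin n) ℂ) where
  carrier := {X | Xᵀ * A + A * X = 0}
  add_mem' := by
    intro a b ha hb
    simp only [Set.mem_setOf_eq] at ha hb ⊢
    have key : (a + b)ᵀ * A + A * (a + b) = (aᵀ * A + A * a) + (bᵀ * A + A * b) := by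
      rw [Matrix.transpose_add]; noncomm_ring
    rw [key, ha, hb, add_zero]
  zero_mem' := by simp
  smul_mem' := by
    intro c x hx
    simp only [Set.mem_setOf_eq] at hx ⊢
    rw [Matrix.transpose_smul, Matrix.smul_mul, Matrix.mul_smul, ← smul_add, hx, smul_zero]


/-- Fueled chain-aliveness. -/
def aliveGo : ℕ → ℕ → ℕ → ℕ → Bool
  | 0, _, _, _ => true
  | f+1, n, a, b => if n ≤ a + 2 then true else if n ≤ b + 2 then false else aliveGo f n (b+2) (a+2)

def aliveB (n a b : ℕ) : Bool := aliveGo n n a b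

theorem aliveGo_succ (f : ℕ) : ∀ n a b : ℕ, n ≤ min a b + 2 + 2 * f →
    aliveGo f n a b = aliveGo (f+1) n a b := by
  induction f with
  | zero =>
    intro n a b h
    have : n ≤ a + 2 := by omega
    simp [aliveGo, this]
  | succ f ih =>
    intro n a b h
    show (if n ≤ a + 2 then true else if n ≤ b + 2 then false else aliveGo f n (b+2) (a+2))
      = (if n ≤ a + 2 then true else if n ≤ b + 2 then false else aliveGo (f+1) n (b+2) (a+2))
    by_cases h1 : n ≤ a + 2
    · simp [h1]
    · by_cases h2 : n ≤ b + 2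
      · simp [h1, h2]
      · simp only [if_neg h1, if_neg h2]
        exact ih n (b+2) (a+2) (by omega)

theorem aliveGo_mono {f g : ℕ} (hfg : f ≤ g) : ∀ n a b : ℕ, n ≤ min a b + 2 + 2 * f →
    aliveGo f n a b = aliveGo g n a b := by
  induction g, hfg using Nat.le_induction with
  | base => intro n a b _; rfl
  | succ g hg ih =>
    intro n a b h
    rw [ih n a b h]
    exact aliveGo_succ g n a b (by omega)

theorem aliveB_unfold (n a b : ℕ) :
    aliveB n a b = if n ≤ a + 2 then true else if n ≤ b + 2 then false else aliveB n (b+2) (a+2) := by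
  cases n with
  | zero => simp [aliveB, aliveGo]
  | succ m =>
    show aliveGo (m+1) (m+1) a b = _
    show (if m+1 ≤ a + 2 then true else if m+1 ≤ b + 2 then false else aliveGo m (m+1) (b+2) (a+2)) = _
    by_cases h1 : m+1 ≤ a + 2
    · simp [h1]
    · by_cases h2 : m+1 ≤ b + 2
      · simp [h1, h2]
      · simp only [if_neg h1, if_neg h2]
        exact aliveGo_mono (Nat.le_succ m) (m+1) (b+2) (a+2) (by omega)

theorem alive_shift (n a b : ℕ) : aliveB (n+4) (a+4) (b+4) = aliveB n a b := by
  rw [aliveB_unfold, aliveB_unfold n a b]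
  by_cases h1 : n ≤ a + 2
  · rw [if_pos (by omega : n + 4 ≤ a + 4 + 2), if_pos h1]
  · by_cases h2 : n ≤ b + 2
    · rw [if_neg (by omega : ¬ (n + 4 ≤ a + 4 + 2)), if_pos (by omega : n + 4 ≤ b + 4 + 2),
        if_neg h1, if_pos h2]
    · rw [if_neg (by omega : ¬ (n + 4 ≤ a + 4 + 2)), if_neg (by omega : ¬ (n + 4 ≤ b + 4 + 2)),
        if_neg h1, if_neg h2]
      rw [show b + 4 + 2 = (b+2) + 4 by omega, show a + 4 + 2 = (a+2) + 4 by omega]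
      exact alive_shift n (b+2) (a+2)
termination_by (n - a) + (n - b)
decreasing_by omega

theorem alive_take (n a b : ℕ) (hn : 2 ≤ n) (ha : a < 2) (hb : b < n) :
    aliveB (n+4) a b = aliveB n a b := by
  rw [aliveB_unfold (n+4) a b, if_neg (show ¬ (n+4 ≤ a+2) by omega),
    if_neg (show ¬ (n+4 ≤ b+2) by omega),
    aliveB_unfold (n+4) (b+2) (a+2), if_neg (show ¬ (n+4 ≤ b+2+2) by omega),
    if_neg (show ¬ (n+4 ≤ a+2+2) by omega),
    show b + 2 + 2 = b + 4 by omega, show a + 2 + 2 = a + 4 by omega]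
  exact alive_shift n a b

theorem alive_dead2 (n a b : ℕ) (hn : 4 ≤ n) (ha : a < 2) (hb1 : n - 2 ≤ b) (hb2 : b < n) :
    aliveB (n+4) a b = false := by
  rw [aliveB_unfold (n+4) a b, if_neg (show ¬ (n+4 ≤ a+2) by omega),
    if_neg (show ¬ (n+4 ≤ b+2) by omega),
    aliveB_unfold (n+4) (b+2) (a+2), if_neg (show ¬ (n+4 ≤ b+2+2) by omega),
    if_neg (show ¬ (n+4 ≤ a+2+2) by omega),
    aliveB_unfold (n+4) (a+2+2) (b+2+2), if_neg (show ¬ (n+4 ≤ a+2+2+2) by omega),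
    if_pos (show n+4 ≤ b+2+2+2 by omega)]

theorem alive_top (n a b : ℕ) (hn : 4 ≤ n) (ha : a < 2) (hb1 : n ≤ b) (hb2 : b < n + 2) :
    aliveB (n+4) a b = true := by
  rw [aliveB_unfold (n+4) a b, if_neg (show ¬ (n+4 ≤ a+2) by omega),
    if_neg (show ¬ (n+4 ≤ b+2) by omega),
    aliveB_unfold (n+4) (b+2) (a+2), if_pos (show n+4 ≤ b+2+2 by omega)]

/-- The set of free (alive) chain starts. -/
def Sfin (n : ℕ) : Finset (ℕ × ℕ) :=
  (Finset.range 2 ×ˢ Finset.range (n-2)).filter fun p => aliveB n p.1 p.2 = true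

theorem card_step (n : ℕ) (hn : 4 ≤ n) : (Sfin (n+4)).card = (Sfin n).card + 4 := by
  have he : Sfin (n+4) = Sfin n ∪ (Finset.range 2 ×ˢ {n, n+1}) := by
    ext ⟨a, b⟩
    simp only [Sfin, Finset.mem_filter, Finset.mem_product, Finset.mem_range, Finset.mem_union,
      Finset.mem_insert, Finset.mem_singleton]
    constructor
    · rintro ⟨⟨ha, hb⟩, hal⟩
      rcases lt_or_ge b (n-2) with h | h
      · exact Or.inl ⟨⟨ha, h⟩, by rw [← alive_take n a b (by omega) ha (by omega)]; exact hal⟩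
      · rcases lt_or_ge b n with h2 | h2
        · rw [alive_dead2 n a b hn ha h h2] at hal; exact absurd hal (by simp)
        · exact Or.inr ⟨ha, by omega⟩
    · rintro (⟨⟨ha, hb⟩, hal⟩ | ⟨ha, hb⟩)
      · exact ⟨⟨ha, by omega⟩, by rw [alive_take n a b (by omega) ha (by omega)]; exact hal⟩
      · exact ⟨⟨ha, by omega⟩, alive_top n a b hn ha (by omega) (by omega)⟩
  rw [he, Finset.card_union_of_disjoint]
  · congr 1
    rw [Finset.card_product, Finset.card_range]
    rw [Finset.card_insert_of_notMem (by simp), Finset.card_singleton]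
  · rw [Finset.disjoint_left]
    rintro ⟨a, b⟩ hp hq
    simp only [Sfin, Finset.mem_filter, Finset.mem_product, Finset.mem_range] at hp
    simp only [Finset.mem_product, Finset.mem_insert, Finset.mem_singleton] at hq
    omega

theorem Scard : ∀ n, 4 ≤ n → (Sfin n).card =
    (if n % 4 = 0 then n else if n % 4 = 1 then n else if n % 4 = 2 then n + 2 else n + 1) := by
  intro n
  induction n using Nat.strong_induction_on with
  | _ n IH =>
    intro hn
    rcases lt_or_ge n 8 with h8 | h8
    · interval_cases n <;> decide
    · obtain ⟨m, rfl⟩ : ∃ m, n = m + 4 := ⟨n - 4, by omega⟩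
      rw [card_step m (by omega), IH m (by omega) (by omega)]
      have hm : (m+4) % 4 = m % 4 := by omega
      rcases (by omega : m % 4 = 0 ∨ m % 4 = 1 ∨ m % 4 = 2 ∨ m % 4 = 3) with h|h|h|h <;>
        simp [hm, h]



/-- Zero-extension of a matrix to a function on `ℕ × ℕ`. -/
def extM (n : ℕ) (X : Matrix (Fin n) (Fin n) ℂ) (a b : ℕ) : ℂ :=
  if h : a < n ∧ b < n then X ⟨a, h.1⟩ ⟨b, h.2⟩ else 0

theorem extM_of_lt {n : ℕ} (X : Matrix (Fin n) (Fin n) ℂ) {a b : ℕ} (ha : a < n) (hb : b < n) :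
    extM n X a b = X ⟨a, ha⟩ ⟨b, hb⟩ := dif_pos ⟨ha, hb⟩

theorem extM_of_ge {n : ℕ} (X : Matrix (Fin n) (Fin n) ℂ) {a b : ℕ} (h : n ≤ a ∨ n ≤ b) :
    extM n X a b = 0 := dif_neg (by omega)

theorem sq_entry (n : ℕ) (i j : Fin n) :
    (shiftMat n ^ 2) i j = if (j : ℕ) = (i : ℕ) + 2 then 1 else 0 := by
  rw [sq, Matrix.mul_apply]
  rcases lt_or_ge ((i : ℕ) + 1) n with h | h
  · rw [Finset.sum_eq_single (⟨(i : ℕ) + 1, h⟩ : Fin n)]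
    · simp [shiftMat]
    · intro k _ hk
      simp only [shiftMat, Matrix.of_apply]
      rw [if_neg, zero_mul]
      intro hc
      exact hk (Fin.ext hc)
    · intro hk
      exact absurd (Finset.mem_univ _) hk
  · have h0 : ∀ k : Fin n, shiftMat n i k * shiftMat n k j = 0 := by
      intro k
      simp only [shiftMat, Matrix.of_apply]
      rw [if_neg (by omega), zero_mul]
    rw [Finset.sum_congr rfl (fun k _ => h0 k), Finset.sum_const, smul_zero,
      if_neg (by omega)]

theorem sumA {n : ℕ} (X : Matrix (Fin n) (Fin n) ℂ) (i j : Fin n) :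
    ∑ k, (shiftMat n ^ 2) i k * X k j = extM n X ((i : ℕ) + 2) (j : ℕ) := by
  rcases lt_or_ge ((i : ℕ) + 2) n with h | h
  · rw [Finset.sum_eq_single (⟨(i : ℕ) + 2, h⟩ : Fin n)]
    · rw [sq_entry, if_pos rfl, one_mul, extM_of_lt X h j.isLt]
    · intro k _ hk
      rw [sq_entry, if_neg (fun hc => hk (Fin.ext hc)), zero_mul]
    · intro hk
      exact absurd (Finset.mem_univ _) hk
  · rw [extM_of_ge X (Or.inl h)]
    apply Finset.sum_eq_zero
    intro k _
    rw [sq_entry, if_neg (by omega), zero_mul]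

theorem sumB {n : ℕ} (X : Matrix (Fin n) (Fin n) ℂ) (i j : Fin n) :
    ∑ k, X k i * (shiftMat n ^ 2) k j =
      if 2 ≤ (j : ℕ) then extM n X ((j : ℕ) - 2) (i : ℕ) else 0 := by
  rcases le_or_gt 2 ((j : ℕ)) with h | h
  · rw [if_pos h]
    have hlt : (j : ℕ) - 2 < n := by omega
    rw [Finset.sum_eq_single (⟨(j : ℕ) - 2, hlt⟩ : Fin n)]
    · have hc : (j : ℕ) = ((⟨(j : ℕ) - 2, hlt⟩ : Fin n) : ℕ) + 2 := by
        show (j : ℕ) = (j : ℕ) - 2 + 2; omega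
      rw [sq_entry, if_pos hc, mul_one, extM_of_lt X hlt i.isLt]
    · intro k _ hk
      rw [sq_entry, if_neg (fun hc => hk (Fin.ext (show (k : ℕ) = (j : ℕ) - 2 by omega))),
        mul_zero]
    · intro hk
      exact absurd (Finset.mem_univ _) hk
  · rw [if_neg (by omega)]
    apply Finset.sum_eq_zero
    intro k _
    rw [sq_entry, if_neg (by omega), mul_zero]

/-- Membership in the solution space, in terms of zero-extended entries. -/
theorem mem_iff {n : ℕ} (hn : 4 ≤ n) (X : Matrix (Fin n) (Fin n) ℂ) :
    X ∈ solSpace n (shiftMat n ^ 2) ↔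
      ((∀ a b : ℕ, a + 2 < n → extM n X a b + extM n X (b+2) (a+2) = 0) ∧
       (∀ a b : ℕ, 2 ≤ a → b < 2 → extM n X a b = 0)) := by
  have hmem : X ∈ solSpace n (shiftMat n ^ 2) ↔
      ∀ i j : Fin n, (if 2 ≤ (j : ℕ) then extM n X ((j : ℕ) - 2) (i : ℕ) else 0)
        + extM n X ((i : ℕ) + 2) (j : ℕ) = 0 := by
    constructor
    · intro h i j
      have := congrFun (congrFun h i) j
      simp only [Matrix.add_apply, Matrix.mul_apply, Matrix.transpose_apply,
        Matrix.zero_apply] at this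
      rwa [sumB, sumA] at this
    · intro h
      ext i j
      simp only [Matrix.add_apply, Matrix.mul_apply, Matrix.transpose_apply, Matrix.zero_apply]
      rw [sumB, sumA]
      exact h i j
  rw [hmem]
  constructor
  · intro h
    constructor
    · intro a b ha
      rcases lt_or_ge b n with hb | hb
      · have := h ⟨b, hb⟩ ⟨a + 2, ha⟩
        simpa using this
      · rw [extM_of_ge X (Or.inr hb), extM_of_ge X (Or.inl (by omega)), add_zero]
    · intro a b ha hb
      rcases lt_or_ge a n with h2 | h2
      · have := h ⟨a - 2, by omega⟩ ⟨b, by omega⟩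
        simp only [if_neg (show ¬ (2 ≤ b) by omega), zero_add] at this
        rw [show a - 2 + 2 = a by omega] at this
        exact this
      · exact extM_of_ge X (Or.inl h2)
  · rintro ⟨h1, h2⟩ i j
    rcases le_or_gt 2 ((j : ℕ)) with hj | hj
    · rw [if_pos hj]
      have := h1 ((j : ℕ) - 2) (i : ℕ) (by omega)
      rw [show (j : ℕ) - 2 + 2 = (j : ℕ) by omega] at this
      exact this
    · rw [if_neg (by omega), zero_add]
      rcases lt_or_ge ((i : ℕ) + 2) n with h3 | h3
      · exact h2 ((i : ℕ) + 2) (j : ℕ) (by omega) hj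
      · exact extM_of_ge X (Or.inl h3)
def fire1 (a0 b0 a b : ℕ) : Prop := a + b0 = b + a0 ∧ a0 ≤ a ∧ (a - a0) % 4 = 0
def fire2 (a0 b0 a b : ℕ) : Prop := a + a0 = b + b0 ∧ b0 + 2 ≤ a ∧ (a - b0) % 4 = 2

instance (a0 b0 a b : ℕ) : Decidable (fire1 a0 b0 a b) := by unfold fire1; infer_instance
instance (a0 b0 a b : ℕ) : Decidable (fire2 a0 b0 a b) := by unfold fire2; infer_instance

/-- value of the chain basis matrix at position `(a, b)` (ℕ-level). -/
noncomputable def Bval (a0 b0 a b : ℕ) : ℂ :=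
  if fire1 a0 b0 a b then 1 else if fire2 a0 b0 a b then -1 else 0

noncomputable def Bmat (n a0 b0 : ℕ) : Matrix (Fin n) (Fin n) ℂ :=
  Matrix.of fun r c => Bval a0 b0 (r : ℕ) (c : ℕ)

theorem extM_Bmat (n a0 b0 a b : ℕ) :
    extM n (Bmat n a0 b0) a b = if a < n ∧ b < n then Bval a0 b0 a b else 0 := by
  unfold extM
  split
  · rfl
  · rfl

/-- cases `fire1` and `fire2` are mutually exclusive. -/
theorem fire_disj (a0 b0 a b : ℕ) : ¬ (fire1 a0 b0 a b ∧ fire2 a0 b0 a b) := by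
  unfold fire1 fire2; omega

/-- If the start is alive, the pattern avoids the right dead zone. -/
theorem notfire (n a0 b0 a b : ℕ) (h : aliveB n a0 b0 = true)
    (h1 : a + 2 < n) (h2 : n ≤ b + 2) (h3 : b < n) :
    ¬ fire1 a0 b0 a b ∧ ¬ fire2 a0 b0 a b := by
  by_cases hc : n ≤ a0 + 2
  · constructor <;> (intro hf; simp only [fire1, fire2] at hf ⊢; omega)
  · by_cases hd : n ≤ b0 + 2
    · rw [aliveB_unfold, if_neg hc, if_pos hd] at h
      exact absurd h (by simp)
    · have h' : aliveB n (b0+2) (a0+2) = true := by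
        rw [aliveB_unfold, if_neg hc, if_neg hd] at h
        exact h
      have IH := notfire n (b0+2) (a0+2) a b h' h1 h2 h3
      constructor
      · intro hf
        exact IH.2 (by unfold fire1 at hf; unfold fire2; omega)
      · intro hf
        exact IH.1 (by unfold fire2 at hf; unfold fire1; omega)
termination_by (n - a0) + (n - b0)
decreasing_by omega

theorem Bmat_mem (n a0 b0 : ℕ) (hn : 4 ≤ n) (ha0 : a0 < 2) (hb0 : b0 + 2 < n)
    (hal : aliveB n a0 b0 = true) : Bmat n a0 b0 ∈ solSpace n (shiftMat n ^ 2) := by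
  rw [mem_iff hn]
  constructor
  · intro a b ha
    rcases lt_or_ge (b+2) n with hb | hb
    · rw [extM_Bmat, extM_Bmat, if_pos ⟨by omega, by omega⟩, if_pos ⟨by omega, by omega⟩]
      by_cases f1 : fire1 a0 b0 a b
      · have g2 : fire2 a0 b0 (b+2) (a+2) := by unfold fire1 at f1; unfold fire2; omega
        have g1 : ¬ fire1 a0 b0 (b+2) (a+2) := fun g1 => fire_disj a0 b0 (b+2) (a+2) ⟨g1, g2⟩
        rw [Bval, Bval, if_pos f1, if_neg g1, if_pos g2]
        ring
      · by_cases f2 : fire2 a0 b0 a b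
        · have g1 : fire1 a0 b0 (b+2) (a+2) := by unfold fire2 at f2; unfold fire1; omega
          rw [Bval, Bval, if_neg f1, if_pos f2, if_pos g1]
          ring
        · have g1 : ¬ fire1 a0 b0 (b+2) (a+2) := by
            intro g; apply f2; unfold fire1 at g; unfold fire2; omega
          have g2 : ¬ fire2 a0 b0 (b+2) (a+2) := by
            intro g; apply f1; unfold fire2 at g; unfold fire1; omega
          rw [Bval, Bval, if_neg f1, if_neg f2, if_neg g1, if_neg g2]
          ring
    · rcases lt_or_ge b n with hb2 | hb2
      · rw [extM_Bmat, extM_Bmat, if_pos ⟨(show a < n by omega), hb2⟩,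
          if_neg (show ¬ (b + 2 < n ∧ a + 2 < n) by omega), add_zero]
        have := notfire n a0 b0 a b hal ha hb hb2
        rw [Bval, if_neg this.1, if_neg this.2]
      · rw [extM_Bmat, extM_Bmat, if_neg (show ¬ (a < n ∧ b < n) by omega),
          if_neg (show ¬ (b + 2 < n ∧ a + 2 < n) by omega), add_zero]
  · intro a b ha hb
    rw [extM_Bmat]
    split
    · rw [Bval, if_neg (by unfold fire1; omega), if_neg (by unfold fire2; omega)]
    · rfl

theorem Bval_start (a0 b0 a b : ℕ) (ha0 : a0 < 2) (ha : a < 2) :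
    Bval a0 b0 a b = if a = a0 ∧ b = b0 then 1 else 0 := by
  rw [Bval]
  by_cases h : a = a0 ∧ b = b0
  · rw [if_pos h, if_pos (by unfold fire1; omega)]
  · rw [if_neg h, if_neg (by unfold fire1; omega), if_neg (by unfold fire2; omega)]

/-- entries in the dead zone / propagation: a solution vanishing on alive starts is zero. -/
theorem dead_zero (n : ℕ) (X : Matrix (Fin n) (Fin n) ℂ)
    (hM1 : ∀ a b : ℕ, a + 2 < n → extM n X a b + extM n X (b+2) (a+2) = 0) :
    ∀ a b : ℕ, a < n → b < n → aliveB n a b = false → extM n X a b = 0 := by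
  intro a b ha hb hal
  by_cases hc : n ≤ a + 2
  · rw [aliveB_unfold, if_pos hc] at hal
    exact absurd hal (by simp)
  · by_cases hd : n ≤ b + 2
    · have := hM1 a b (by omega)
      have hz : extM n X (b+2) (a+2) = 0 := extM_of_ge X (Or.inl hd)
      rwa [hz, add_zero] at this
    · rw [aliveB_unfold, if_neg hc, if_neg hd] at hal
      have h2 := dead_zero n X hM1 (b+2) (a+2) (by omega) (by omega) hal
      have := hM1 a b (by omega)
      rw [h2, add_zero] at this
      exact this
termination_by a b => (n - a) + (n - b)
decreasing_by omega

theorem entries_zero (n : ℕ) (hn : 4 ≤ n) (X : Matrix (Fin n) (Fin n) ℂ)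
    (hM1 : ∀ a b : ℕ, a + 2 < n → extM n X a b + extM n X (b+2) (a+2) = 0)
    (hM2 : ∀ a b : ℕ, 2 ≤ a → b < 2 → extM n X a b = 0)
    (hS : ∀ a b : ℕ, a < 2 → b + 2 < n → aliveB n a b = true → extM n X a b = 0) :
    ∀ a b : ℕ, extM n X a b = 0 := by
  intro a b
  rcases lt_or_ge a n with ha | ha
  · rcases lt_or_ge b n with hb | hb
    · by_cases ha2 : a < 2
      · by_cases hb2 : b + 2 < n
        · rcases Bool.eq_false_or_eq_true (aliveB n a b) with h | h
          · exact hS a b ha2 hb2 h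
          · exact dead_zero n X hM1 a b ha hb h
        · have := hM1 a b (by omega)
          have hz : extM n X (b+2) (a+2) = 0 := extM_of_ge X (Or.inl (by omega : n ≤ b + 2))
          rwa [hz, add_zero] at this
      · by_cases hb2 : b < 2
        · exact hM2 a b (by omega) hb2
        · have h1 := hM1 (b-2) (a-2) (by omega)
          rw [show b - 2 + 2 = b by omega, show a - 2 + 2 = a by omega] at h1
          have h2 := entries_zero n hn X hM1 hM2 hS (b-2) (a-2)
          rw [h2, zero_add] at h1
          exact h1
    · exact extM_of_ge X (Or.inr hb)
  · exact extM_of_ge X (Or.inl ha)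
termination_by a b => a + b
decreasing_by omega
theorem extM_add {n : ℕ} (X Y : Matrix (Fin n) (Fin n) ℂ) (a b : ℕ) :
    extM n (X + Y) a b = extM n X a b + extM n Y a b := by
  unfold extM; split <;> simp

theorem extM_smul {n : ℕ} (c : ℂ) (X : Matrix (Fin n) (Fin n) ℂ) (a b : ℕ) :
    extM n (c • X) a b = c * extM n X a b := by
  unfold extM; split <;> simp

theorem extM_self {n : ℕ} (X : Matrix (Fin n) (Fin n) ℂ) (i j : Fin n) :
    extM n X (i : ℕ) (j : ℕ) = X i j :=
  extM_of_lt X i.isLt j.isLt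

noncomputable def phi (n : ℕ) :
    (solSpace n (shiftMat n ^ 2)) →ₗ[ℂ] ({ p // p ∈ Sfin n } → ℂ) where
  toFun := fun X s => extM n X.1 s.1.1 s.1.2
  map_add' := by
    intro X Y
    funext s
    simp only [Submodule.coe_add, extM_add, Pi.add_apply]
  map_smul' := by
    intro c X
    funext s
    simp only [Submodule.coe_smul, extM_smul, Pi.smul_apply, RingHom.id_apply, smul_eq_mul]

theorem phi_inj (n : ℕ) (hn : 4 ≤ n) : Function.Injective (phi n) := by
  rw [injective_iff_map_eq_zero]
  intro X hX
  have hmem := (mem_iff hn X.1).mp X.2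
  have hS : ∀ a b : ℕ, a < 2 → b + 2 < n → aliveB n a b = true → extM n X.1 a b = 0 := by
    intro a b ha hb hal
    have hm : (a, b) ∈ Sfin n := by
      simp only [Sfin, Finset.mem_filter, Finset.mem_product, Finset.mem_range]
      exact ⟨⟨ha, by omega⟩, hal⟩
    exact congrFun hX ⟨(a, b), hm⟩
  have hz := entries_zero n hn X.1 hmem.1 hmem.2 hS
  apply Subtype.ext
  ext i j
  have := hz (i : ℕ) (j : ℕ)
  rwa [extM_self] at this

theorem phi_surj (n : ℕ) (hn : 4 ≤ n) : Function.Surjective (phi n) := by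
  intro c
  set Y : Matrix (Fin n) (Fin n) ℂ :=
    ∑ s ∈ (Sfin n).attach, c s • Bmat n s.1.1 s.1.2 with hY
  have hbound : ∀ s : { p // p ∈ Sfin n }, s.1.1 < 2 ∧ s.1.2 + 2 < n ∧
      aliveB n s.1.1 s.1.2 = true := by
    intro s
    have := s.2
    simp only [Sfin, Finset.mem_filter, Finset.mem_product, Finset.mem_range] at this
    exact ⟨this.1.1, by omega, this.2⟩
  have hYmem : Y ∈ solSpace n (shiftMat n ^ 2) := by
    apply Submodule.sum_mem
    intro s _
    exact Submodule.smul_mem _ _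
      (Bmat_mem n s.1.1 s.1.2 hn (hbound s).1 (hbound s).2.1 (hbound s).2.2)
  refine ⟨⟨Y, hYmem⟩, ?_⟩
  funext s
  show extM n Y s.1.1 s.1.2 = c s
  have ha : s.1.1 < n := by have := hbound s; omega
  have hb : s.1.2 < n := by have := hbound s; omega
  rw [extM_of_lt Y ha hb, hY]
  rw [Matrix.sum_apply]
  rw [Finset.sum_eq_single s]
  · simp only [Matrix.smul_apply, smul_eq_mul]
    have : Bmat n s.1.1 s.1.2 ⟨s.1.1, ha⟩ ⟨s.1.2, hb⟩ = 1 := by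
      show Bval s.1.1 s.1.2 s.1.1 s.1.2 = 1
      rw [Bval_start _ _ _ _ (hbound s).1 (hbound s).1, if_pos ⟨rfl, rfl⟩]
    rw [this, mul_one]
  · intro t _ hts
    simp only [Matrix.smul_apply, smul_eq_mul]
    have : Bmat n t.1.1 t.1.2 ⟨s.1.1, ha⟩ ⟨s.1.2, hb⟩ = 0 := by
      show Bval t.1.1 t.1.2 s.1.1 s.1.2 = 0
      rw [Bval_start _ _ _ _ (hbound t).1 (hbound s).1, if_neg]
      rintro ⟨h1, h2⟩
      apply hts
      apply Subtype.ext
      have : t.1 = (t.1.1, t.1.2) := rfl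
      rw [this, ← h1, ← h2]
    rw [this, mul_zero]
  · intro hs
    exact absurd ((Sfin n).mem_attach s) hs

/-- For `n ≥ 4`, the dimension of
`sol_{A_n²} = {X | Xᵀ A_n² + A_n² X = 0}` is `n` if `n ≡ 0, 1 (mod 4)`,
`n + 2` if `n ≡ 2 (mod 4)`, and `n + 1` if `n ≡ 3 (mod 4)`. -/
theorem stmt_16 (n : ℕ) (hn : 4 ≤ n) :
    Module.finrank ℂ ↥(solSpace n (shiftMat n ^ 2)) =
      if n % 4 = 0 then n
      else if n % 4 = 1 then n
      else if n % 4 = 2 then n + 2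
      else n + 1 := by
  have e : (solSpace n (shiftMat n ^ 2)) ≃ₗ[ℂ] ({ p // p ∈ Sfin n } → ℂ) :=
    LinearEquiv.ofBijective (phi n) ⟨phi_inj n hn, phi_surj n hn⟩
  rw [e.finrank_eq, Module.finrank_pi, Fintype.card_coe, Scard n hn]
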